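/- For |q| < 1, one has ∑_{n≥1,m≥1} q^{nm}/((q;q)_n (q;q)_m) = 1/(q;q)_∞ · ∑_{n≥1} qⁿ/(1-qⁿ) + ∑_{n≥1} ( 1/(q;q)_∞ − 1/(q;q)_n ). -/

import Mathlib

/-- The finite q-Pochhammer symbol `(q;q)_n`. -/
noncomputable def qPoch (q : ℂ) (n : ℕ) : ℂ := ∏ i ∈ Finset.range n, (1 - q ^ (i + 1))

/-- The infinite q-Pochhammer symbol `(q;q)_∞`. -/
noncomputable def qPochInf (q : ℂ) : ℂ := ∏' i : ℕ, (1 - q ^ (i + 1))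

/-- The infinite q-Pochhammer symbol `(a;q)_∞ = ∏_{i≥0} (1 - a q^i)`. -/
noncomputable def pochInf (a q : ℂ) : ℂ := ∏' i : ℕ, (1 - a * q ^ i)

/-!
Summing over `m` first, Euler's identity `∑_{m≥0} zᵐ / (q;q)ₘ = 1 / (z;q)_∞` at `z = qⁿ` turns
row `n` into `(1 / (qⁿ;q)_∞ - 1) / (q;q)ₙ = 1 / ((1 - qⁿ) (q;q)_∞) - 1 / (q;q)ₙ`, and
`1 / (1 - qⁿ) = qⁿ / (1 - qⁿ) + 1`. Euler's identity follows from the q-difference equation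
`F(qz) = (1 - z) F(z)` of the series `F`: iterating it gives `F(z) (z;q)_N = F(z qᴺ) → F(0) = 1`.
-/

open Finset Filter Topology

noncomputable def eulerSeries (q z : ℂ) : ℂ := ∑' m : ℕ, z ^ m / qPoch q m

lemma one_sub_ne_zero_of_norm_lt_one {w : ℂ} (hw : ‖w‖ < 1) : 1 - w ≠ 0 :=
  sub_ne_zero.2 fun h => by simp [← h] at hw

lemma summable_pow_mul_of_norm_le {z : ℂ} (hz : ‖z‖ < 1) {u : ℕ → ℂ} {C : ℝ}
    (hu : ∀ n, ‖u n‖ ≤ C) : Summable fun n => z ^ n * u n :=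
  .of_norm_bounded ((summable_geometric_of_lt_one (norm_nonneg z) hz).mul_right C) fun n => by
    rw [norm_mul, norm_pow]
    exact mul_le_mul_of_nonneg_left (hu n) (by positivity)

section

variable {q : ℂ}

lemma qPoch_succ (q : ℂ) (n : ℕ) : qPoch q (n + 1) = qPoch q n * (1 - q ^ (n + 1)) :=
  prod_range_succ _ n

lemma norm_pow_succ_lt_one (hq : ‖q‖ < 1) (n : ℕ) : ‖q ^ (n + 1)‖ < 1 := by
  rw [norm_pow]
  exact pow_lt_one₀ (norm_nonneg q) hq n.succ_ne_zero

lemma norm_mul_pow_le (hq : ‖q‖ ≤ 1) (a : ℂ) (n : ℕ) : ‖a * q ^ n‖ ≤ ‖a‖ := by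
  rw [norm_mul, norm_pow]
  exact mul_le_of_le_one_right (norm_nonneg a) (pow_le_one₀ (norm_nonneg q) hq)

lemma qPoch_ne_zero (hq : ‖q‖ < 1) (n : ℕ) : qPoch q n ≠ 0 :=
  prod_ne_zero_iff.2 fun i _ => one_sub_ne_zero_of_norm_lt_one (norm_pow_succ_lt_one hq i)

lemma summable_norm_mul_pow (hq : ‖q‖ < 1) (a : ℂ) : Summable fun i : ℕ => ‖a * q ^ i‖ := by
  simpa [norm_mul, norm_pow] using
    (summable_geometric_of_lt_one (norm_nonneg q) hq).mul_left ‖a‖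

lemma multipliable_pochInf (hq : ‖q‖ < 1) (a : ℂ) : Multipliable fun i : ℕ => 1 - a * q ^ i := by
  simpa [sub_eq_add_neg] using multipliable_one_add_of_summable (f := fun i => -(a * q ^ i))
    (by simpa using summable_norm_mul_pow hq a)

lemma pochInf_ne_zero (hq : ‖q‖ < 1) {a : ℂ} (ha : ‖a‖ < 1) : pochInf a q ≠ 0 := by
  have hfactor (i : ℕ) : 1 + -(a * q ^ i) ≠ 0 := by
    rw [← sub_eq_add_neg]
    exact one_sub_ne_zero_of_norm_lt_one ((norm_mul_pow_le hq.le a i).trans_lt ha)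
  simpa [pochInf, sub_eq_add_neg] using
    tprod_one_add_ne_zero_of_summable hfactor (by simpa using summable_norm_mul_pow hq a)

lemma qPochInf_eq_pochInf (q : ℂ) : qPochInf q = pochInf q q :=
  tprod_congr fun i => by rw [pow_succ']

lemma qPochInf_ne_zero (hq : ‖q‖ < 1) : qPochInf q ≠ 0 := by
  rw [qPochInf_eq_pochInf]
  exact pochInf_ne_zero hq hq

lemma qPoch_mul_pochInf (hq : ‖q‖ < 1) (n : ℕ) :
    qPoch q n * pochInf (q ^ (n + 1)) q = qPochInf q := by
  have htail : (fun i : ℕ => 1 - q ^ (n + 1) * q ^ i) = fun i => 1 - q ^ (i + n + 1) := by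
    ext i
    ring
  have h := multipliable_pochInf hq (q ^ (n + 1))
  rw [htail] at h
  rw [qPoch, qPochInf, pochInf, htail]
  exact Multipliable.prod_mul_tprod_nat_mul' (f := fun i => 1 - q ^ (i + 1)) h

lemma exists_norm_inv_qPoch_le (hq : ‖q‖ < 1) : ∃ C, ∀ n, ‖(qPoch q n)⁻¹‖ ≤ C := by
  have hlim : Tendsto (qPoch q) atTop (𝓝 (qPochInf q)) :=
    (ModularForm.multipliable_one_sub_pow hq).hasProd.tendsto_prod_nat
  obtain ⟨C, hC⟩ := ((hlim.inv₀ (qPochInf_ne_zero hq)).norm).bddAbove_range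
  exact ⟨C, fun n => hC ⟨n, rfl⟩⟩

lemma summable_eulerSeries (hq : ‖q‖ < 1) {z : ℂ} (hz : ‖z‖ < 1) :
    Summable fun m : ℕ => z ^ m / qPoch q m := by
  obtain ⟨C, hC⟩ := exists_norm_inv_qPoch_le hq
  simpa only [div_eq_mul_inv] using summable_pow_mul_of_norm_le hz hC

lemma eulerSeries_zero (q : ℂ) : eulerSeries q 0 = 1 := by
  rw [eulerSeries, tsum_eq_single 0 fun m hm => by rw [zero_pow hm, zero_div]]
  simp [qPoch]

lemma tsum_pow_succ_div_qPoch_succ (hq : ‖q‖ < 1) {z : ℂ} (hz : ‖z‖ < 1) :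
    ∑' m : ℕ, z ^ (m + 1) / qPoch q (m + 1) = eulerSeries q z - 1 := by
  rw [eulerSeries, (summable_eulerSeries hq hz).tsum_eq_zero_add]
  simp [qPoch]

lemma eulerSeries_mul_left (hq : ‖q‖ < 1) {z : ℂ} (hz : ‖z‖ < 1) :
    eulerSeries q (q * z) = (1 - z) * eulerSeries q z := by
  have hqz : ‖q * z‖ < 1 := by simpa [mul_comm] using (norm_mul_pow_le hq.le z 1).trans_lt hz
  have hdiff := (summable_eulerSeries hq hz).sub (summable_eulerSeries hq hqz)
  have hshift (m : ℕ) : z ^ (m + 1) / qPoch q (m + 1) - (q * z) ^ (m + 1) / qPoch q (m + 1)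
      = z * (z ^ m / qPoch q m) := by
    have := one_sub_ne_zero_of_norm_lt_one (norm_pow_succ_lt_one hq m)
    rw [qPoch_succ]
    field_simp [qPoch_ne_zero hq m]
    ring
  have key : eulerSeries q z - eulerSeries q (q * z) = z * eulerSeries q z := by
    rw [eulerSeries, eulerSeries, ← (summable_eulerSeries hq hz).tsum_sub
      (summable_eulerSeries hq hqz), hdiff.tsum_eq_zero_add]
    simp only [pow_zero, sub_self, zero_add, hshift, tsum_mul_left]
  linear_combination -key

lemma eulerSeries_mul_pow (hq : ‖q‖ < 1) {z : ℂ} (hz : ‖z‖ < 1) (N : ℕ) :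
    eulerSeries q (z * q ^ N) = eulerSeries q z * ∏ i ∈ range N, (1 - z * q ^ i) := by
  induction N with
  | zero => simp
  | succ N ih =>
    rw [pow_succ', mul_left_comm, eulerSeries_mul_left hq ((norm_mul_pow_le hq.le z N).trans_lt hz),
      ih, prod_range_succ]
    ring

lemma tendsto_eulerSeries_mul_pow (hq : ‖q‖ < 1) {z : ℂ} (hz : ‖z‖ < 1) :
    Tendsto (fun N : ℕ => eulerSeries q (z * q ^ N)) atTop (𝓝 1) := by
  obtain ⟨C, hC⟩ := exists_norm_inv_qPoch_le hq
  have hlim : Tendsto (fun N : ℕ => z * q ^ N) atTop (𝓝 0) := by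
    simpa using (tendsto_pow_atTop_nhds_zero_of_norm_lt_one hq).const_mul z
  rw [← eulerSeries_zero q]
  refine tendsto_tsum_of_dominated_convergence
    ((summable_geometric_of_lt_one (norm_nonneg z) hz).mul_right C)
    (fun m => (hlim.pow m).div_const _) (.of_forall fun N m => ?_)
  rw [norm_div, norm_pow, div_eq_mul_inv, ← norm_inv]
  gcongr
  · exact norm_mul_pow_le hq.le z N
  · exact hC m

theorem eulerSeries_mul_pochInf (hq : ‖q‖ < 1) {z : ℂ} (hz : ‖z‖ < 1) :
    eulerSeries q z * pochInf z q = 1 := by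
  have hprod : Tendsto (fun N => eulerSeries q z * ∏ i ∈ range N, (1 - z * q ^ i)) atTop
      (𝓝 (eulerSeries q z * pochInf z q)) :=
    (multipliable_pochInf hq z).hasProd.tendsto_prod_nat.const_mul _
  exact tendsto_nhds_unique (hprod.congr fun N => (eulerSeries_mul_pow hq hz N).symm)
    (tendsto_eulerSeries_mul_pow hq hz)

lemma eulerSeries_pow_succ (hq : ‖q‖ < 1) (n : ℕ) :
    eulerSeries q (q ^ (n + 1)) = qPoch q n / qPochInf q := by
  rw [eq_div_iff (qPochInf_ne_zero hq), ← qPoch_mul_pochInf hq n]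
  linear_combination qPoch q n * eulerSeries_mul_pochInf hq (norm_pow_succ_lt_one hq n)

lemma summable_pow_mul_succ_div_qPoch_mul_qPoch (hq : ‖q‖ < 1) :
    Summable fun p : ℕ × ℕ =>
      q ^ ((p.1 + 1) * (p.2 + 1)) / (qPoch q (p.1 + 1) * qPoch q (p.2 + 1)) := by
  obtain ⟨C, hC⟩ := exists_norm_inv_qPoch_le hq
  have hC0 : 0 ≤ C := (norm_nonneg _).trans (hC 0)
  have hgeo := (summable_geometric_of_lt_one (norm_nonneg q) hq).mul_right C
  refine .of_norm_bounded (hgeo.mul_of_nonneg hgeo (fun n => by positivity)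
    (fun n => by positivity)) fun ⟨n, m⟩ => ?_
  have hpow : ‖q‖ ^ ((n + 1) * (m + 1)) ≤ ‖q‖ ^ n * ‖q‖ ^ m := by
    rw [← pow_add]
    exact pow_le_pow_of_le_one (norm_nonneg q) hq.le (by nlinarith)
  calc ‖q ^ ((n + 1) * (m + 1)) / (qPoch q (n + 1) * qPoch q (m + 1))‖
      = ‖q‖ ^ ((n + 1) * (m + 1)) * (‖(qPoch q (n + 1))⁻¹‖ * ‖(qPoch q (m + 1))⁻¹‖) := by
        rw [norm_div, norm_pow, norm_mul, div_eq_mul_inv, mul_inv, norm_inv, norm_inv]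
    _ ≤ (‖q‖ ^ n * ‖q‖ ^ m) * (C * C) := by gcongr <;> exact hC _
    _ = ‖q‖ ^ n * C * (‖q‖ ^ m * C) := by ring

lemma summable_pow_succ_div_one_sub_pow_succ (hq : ‖q‖ < 1) :
    Summable fun n : ℕ => q ^ (n + 1) / (1 - q ^ (n + 1)) := by
  have hlim : Tendsto (fun n : ℕ => q / (1 - q ^ (n + 1))) atTop (𝓝 (q / (1 - 0))) :=
    tendsto_const_nhds.div (tendsto_const_nhds.sub
      ((tendsto_pow_atTop_nhds_zero_of_norm_lt_one hq).comp (tendsto_add_atTop_nat 1))) (by simp)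
  obtain ⟨C, hC⟩ := hlim.norm.bddAbove_range
  refine (summable_pow_mul_of_norm_le hq fun n => hC ⟨n, rfl⟩).congr fun n => ?_
  rw [pow_succ, mul_div_assoc]

lemma tsum_pow_mul_succ_div_qPoch_mul_qPoch (hq : ‖q‖ < 1) (n : ℕ) :
    ∑' m : ℕ, q ^ ((n + 1) * (m + 1)) / (qPoch q (n + 1) * qPoch q (m + 1))
      = 1 / qPochInf q * (q ^ (n + 1) / (1 - q ^ (n + 1)))
          + (1 / qPochInf q - 1 / qPoch q (n + 1)) := by
  have hrow (m : ℕ) : q ^ ((n + 1) * (m + 1)) / (qPoch q (n + 1) * qPoch q (m + 1))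
      = 1 / qPoch q (n + 1) * ((q ^ (n + 1)) ^ (m + 1) / qPoch q (m + 1)) := by
    rw [← pow_mul]
    field_simp
  have h1 := one_sub_ne_zero_of_norm_lt_one (norm_pow_succ_lt_one hq n)
  have h2 := qPochInf_ne_zero hq
  have h3 := qPoch_ne_zero hq n
  rw [tsum_congr hrow, tsum_mul_left, tsum_pow_succ_div_qPoch_succ hq (norm_pow_succ_lt_one hq n),
    eulerSeries_pow_succ hq n, qPoch_succ]
  field_simp
  ring

end

theorem stmt13 (q : ℂ) (hq : ‖q‖ < 1) :
    ∑' p : ℕ × ℕ, q ^ ((p.1 + 1) * (p.2 + 1)) / (qPoch q (p.1 + 1) * qPoch q (p.2 + 1))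
      = 1 / qPochInf q * (∑' n : ℕ, q ^ (n + 1) / (1 - q ^ (n + 1)))
          + ∑' n : ℕ, (1 / qPochInf q - 1 / qPoch q (n + 1)) := by
  have hsum := summable_pow_mul_succ_div_qPoch_mul_qPoch hq
  have hrows := hsum.prod.congr (tsum_pow_mul_succ_div_qPoch_mul_qPoch hq)
  have hA := (summable_pow_succ_div_one_sub_pow_succ hq).mul_left (1 / qPochInf q)
  have hB : Summable fun n : ℕ => 1 / qPochInf q - 1 / qPoch q (n + 1) := by
    simpa using hrows.sub hA
  rw [hsum.tsum_prod, tsum_congr (tsum_pow_mul_succ_div_qPoch_mul_qPoch hq), hA.tsum_add hB,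
    tsum_mul_left]
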